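/- Let u and v be Lyndon words over a well-ordered alphabet. Then the Shirshov factorization of uv is (u, v) if and only if either u is a single letter, or u has length ≥ 2 and u_R ≤_lex v, where (u_L, u_R) is the Shirshov factorization of u. -/

import Mathlib

/-!
Since `v` is Lyndon it dominates its own proper suffixes, so `v` is the largest proper suffix of
`uv` iff it dominates every `sv` with `s` a proper nonempty suffix of `u`. For Lyndon `v`,
`sv <_lex v` holds iff `s ≤_lex v`: otherwise `v <_lex s`, and either `v = sp` and cancelling `s`
in `ssp <_lex sp` gives `sp <_lex p`, against `v` being Lyndon, or `v ≺ s`, whence `v ≺ sv`.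
So `(u, v)` is the Shirshov factorization iff every proper nonempty suffix of `u` is `≤_lex v`;
there is none when `u` is a letter, and otherwise the largest one is `u_R`.
-/

variable {X : Type*} [LinearOrder X] [WellFoundedLT X]

/-- The partial order `≺` on words: `u ≺ v` iff `u = r ++ x :: s`, `v = r ++ y :: t`
with letters `x < y`. -/
def Prec (u v : List X) : Prop :=
  ∃ (r s t : List X) (x y : X), x < y ∧ u = r ++ x :: s ∧ v = r ++ y :: t

/-- The pseudo-lexicographic order: `u <_lex v` iff `v` is a proper prefix of `u` or `u ≺ v`. -/
def PLex (u v : List X) : Prop :=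
  (v <+: u ∧ v ≠ u) ∨ Prec u v

/-- `u ≤_lex v`. -/
def PLexLe (u v : List X) : Prop := u = v ∨ PLex u v

/-- A Lyndon word (Kharchenko convention): a nonempty word strictly greater in the
pseudo-lexicographic order than each of its proper nonempty suffixes. -/
def IsLyndon (u : List X) : Prop :=
  u ≠ [] ∧ ∀ v w : List X, u = v ++ w → v ≠ [] → w ≠ [] → PLex w u


/-- The Shirshov factorization of `u`: `u = uL ++ uR` where `uR` is the
pseudo-lexicographically largest proper (nonempty) suffix of `u`. -/
def IsShirshov (u uL uR : List X) : Prop :=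
  u = uL ++ uR ∧ uL ≠ [] ∧ uR ≠ [] ∧
    ∀ w : List X, w <:+ u → w ≠ u → w ≠ [] → w = uR ∨ PLex w uR

section Lyndon

open OrderDual

variable {α : Type*}

/-- Transports `PLex` to a linear order: reversing the order of the letters and then the
lexicographic order of the words makes a proper prefix larger than the word, as in `PLex`. -/
def lexKey (u : List α) : (List αᵒᵈ)ᵒᵈ := toDual (u.map toDual)

lemma lexKey_injective : Function.Injective (lexKey (α := α)) :=
  toDual.injective.comp (List.map_injective_iff.2 toDual.injective)

lemma suffix_append_or {w u v : List α} (h : w <:+ u ++ v) :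
    w <:+ v ∨ ∃ s, s <:+ u ∧ w = s ++ v := by
  obtain ⟨p, hp⟩ := h
  rcases List.append_eq_append_iff.1 hp with ⟨s, rfl, rfl⟩ | ⟨q, rfl, rfl⟩
  · exact Or.inr ⟨s, List.suffix_append p s, rfl⟩
  · exact Or.inl (List.suffix_append q w)

variable [LinearOrder α]

lemma Prec.append {u v : List α} (h : Prec u v) (w w' : List α) : Prec (u ++ w) (v ++ w') := by
  obtain ⟨r, s, t, x, y, hxy, rfl, rfl⟩ := h
  exact ⟨r, s ++ w, t ++ w', x, y, hxy, by simp, by simp⟩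

lemma pLex_append_self {u w : List α} (hw : w ≠ []) : PLex (u ++ w) u :=
  Or.inl ⟨List.prefix_append u w, by simpa [eq_comm] using hw⟩

lemma PLex.append_right {u v : List α} (h : PLex u v) (w : List α) : PLex (u ++ w) v := by
  rcases h with ⟨hvu, hne⟩ | hprec
  · rcases hvu with ⟨p, rfl⟩
    have hp : p ≠ [] := by simpa using hne
    simpa using pLex_append_self (u := v) (w := p ++ w) (by simp [hp])
  · exact Or.inr (by simpa using hprec.append w [])

lemma pLex_cons_cons_iff {x y : α} {s t : List α} :
    PLex (x :: s) (y :: t) ↔ x < y ∨ x = y ∧ PLex s t := by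
  constructor
  · rintro (⟨⟨p, hp⟩, hne⟩ | ⟨_ | ⟨c, r⟩, s', t', a, b, hab, hs, ht⟩)
    · obtain ⟨rfl, rfl⟩ := List.cons.inj hp
      exact Or.inr ⟨rfl, Or.inl ⟨List.prefix_append t p, by simpa using hne⟩⟩
    · obtain ⟨rfl, -⟩ := List.cons.inj hs
      obtain ⟨rfl, -⟩ := List.cons.inj ht
      exact Or.inl hab
    · obtain ⟨rfl, rfl⟩ := List.cons.inj hs
      obtain ⟨rfl, rfl⟩ := List.cons.inj ht
      exact Or.inr ⟨rfl, Or.inr ⟨r, s', t', a, b, hab, rfl, rfl⟩⟩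
  · rintro (hxy | ⟨rfl, ⟨⟨p, rfl⟩, hne⟩ | ⟨r, s', t', a, b, hab, rfl, rfl⟩⟩)
    · exact Or.inr ⟨[], s, t, x, y, hxy, rfl, rfl⟩
    · exact Or.inl ⟨⟨p, rfl⟩, by simpa using hne⟩
    · exact Or.inr ⟨x :: r, s', t', a, b, hab, rfl, rfl⟩

lemma pLex_iff_lexKey_lt {u v : List α} : PLex u v ↔ lexKey u < lexKey v := by
  induction u generalizing v with
  | nil =>
    simp only [lexKey, toDual_lt_toDual, List.map_nil, List.not_lt_nil, iff_false]
    rintro (⟨hv, hne⟩ | ⟨r, s, t, x, y, -, hs, -⟩)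
    · exact hne (List.prefix_nil.1 hv)
    · simp at hs
  | cons x s ih =>
    cases v with
    | nil => simpa [lexKey] using pLex_append_self (u := []) (w := x :: s) (by simp)
    | cons y t =>
      simp only [pLex_cons_cons_iff, ih, lexKey, toDual_lt_toDual, List.map_cons,
        List.cons_lt_cons_iff, toDual_inj, @eq_comm _ y x]

lemma pLexLe_iff_lexKey_le {u v : List α} : PLexLe u v ↔ lexKey u ≤ lexKey v := by
  rw [le_iff_eq_or_lt, lexKey_injective.eq_iff, PLexLe, pLex_iff_lexKey_lt]

lemma pLex_append_left_iff (p : List α) {s t : List α} : PLex (p ++ s) (p ++ t) ↔ PLex s t := by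
  have : StrictMono fun l : List αᵒᵈ => (p.map toDual) ++ l := fun _ _ => List.append_left_lt
  simp only [pLex_iff_lexKey_lt, lexKey, toDual_lt_toDual, List.map_append, this.lt_iff_lt]

lemma PLex.asymm {u v : List α} (h : PLex u v) : ¬PLex v u := fun h' =>
  lt_asymm (pLex_iff_lexKey_lt.1 h) (pLex_iff_lexKey_lt.1 h')

lemma PLexLe.trans {u v w : List α} (h₁ : PLexLe u v) (h₂ : PLexLe v w) : PLexLe u w :=
  pLexLe_iff_lexKey_le.2 ((pLexLe_iff_lexKey_le.1 h₁).trans (pLexLe_iff_lexKey_le.1 h₂))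

lemma IsLyndon.pLex_of_suffix {v w : List α} (hv : IsLyndon v) (hw : w <:+ v) (hne : w ≠ v)
    (h0 : w ≠ []) : PLex w v := by
  obtain ⟨p, rfl⟩ := hw
  exact hv.2 p w rfl (by rintro rfl; exact hne rfl) h0

lemma IsLyndon.pLex_append_iff {s v : List α} (hv : IsLyndon v) (hs : s ≠ []) :
    PLex (s ++ v) v ↔ PLexLe s v := by
  refine ⟨fun h => ?_, ?_⟩
  · by_contra hsv
    have hvs : PLex v s := by
      rw [pLexLe_iff_lexKey_le, not_le] at hsv
      exact pLex_iff_lexKey_lt.2 hsv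
    rcases hvs with ⟨⟨p, rfl⟩, hne⟩ | hprec
    · have hp : p ≠ [] := by simpa using hne
      have hsp : PLex (s ++ p) p := (pLex_append_left_iff s).1 (by simpa using h)
      exact hsp.asymm (hv.2 s p rfl hs hp)
    · exact h.asymm (Or.inr (by simpa using hprec.append [] v))
  · rintro (rfl | h)
    · exact pLex_append_self hs
    · exact h.append_right v

lemma IsShirshov.right_suffix {u uL uR : List α} (h : IsShirshov u uL uR) : uR <:+ u :=
  ⟨uL, h.1.symm⟩

lemma IsShirshov.right_ne {u uL uR : List α} (h : IsShirshov u uL uR) : uR ≠ u := by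
  intro hR
  exact h.2.1 (List.append_left_eq_self.1 (hR ▸ h.1).symm)

lemma exists_isShirshov {u : List α} (hu : 2 ≤ u.length) : ∃ uL uR, IsShirshov u uL uR := by
  classical
  set S := u.tails.toFinset.filter fun w => w ≠ u ∧ w ≠ []
  have htail : u.tail ∈ S := by
    have hlen : u.tail.length = u.length - 1 := List.length_tail
    simp only [S, Finset.mem_filter, List.mem_toFinset, List.mem_tails]
    refine ⟨List.tail_suffix u, fun h => ?_, List.ne_nil_of_length_pos (by omega)⟩
    rw [h] at hlen
    omega
  obtain ⟨m, hmS, hmax⟩ := S.exists_max_image lexKey ⟨_, htail⟩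
  simp only [S, Finset.mem_filter, List.mem_toFinset, List.mem_tails] at hmS hmax
  obtain ⟨⟨uL, rfl⟩, hmu, hm0⟩ := hmS
  refine ⟨uL, m, rfl, ?_, hm0, fun w hw hwu hw0 => pLexLe_iff_lexKey_le.2 (hmax w ⟨hw, hwu, hw0⟩)⟩
  rintro rfl
  exact hmu rfl

lemma isShirshov_append_iff_forall_suffix {u v : List α} (hu : u ≠ []) (hv : IsLyndon v) :
    IsShirshov (u ++ v) u v ↔ ∀ s, s <:+ u → s ≠ u → s ≠ [] → PLexLe s v := by
  constructor
  · intro h s hs hsu hs0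
    rcases h.2.2.2 (s ++ v) (List.suffix_append_self_iff.2 hs) (by simpa using hsu)
      (by simp [hs0]) with heq | hlt
    · exact absurd (List.append_left_eq_self.1 heq) hs0
    · exact (hv.pLex_append_iff hs0).1 hlt
  · refine fun h => ⟨rfl, hu, hv.1, fun w hw hwuv hw0 => ?_⟩
    rcases suffix_append_or hw with hwv | ⟨s, hs, rfl⟩
    · rcases eq_or_ne w v with rfl | hne
      · exact Or.inl rfl
      · exact Or.inr (hv.pLex_of_suffix hwv hne hw0)
    · rcases eq_or_ne s [] with rfl | hs0
      · exact Or.inl rfl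
      · exact Or.inr ((hv.pLex_append_iff hs0).2 (h s hs (by rintro rfl; exact hwuv rfl) hs0))

lemma forall_suffix_pLexLe_iff {u v : List α} (hu : u ≠ []) :
    (∀ s, s <:+ u → s ≠ u → s ≠ [] → PLexLe s v) ↔
      u.length = 1 ∨ (2 ≤ u.length ∧ ∀ uL uR, IsShirshov u uL uR → PLexLe uR v) := by
  constructor
  · intro h
    rcases Nat.lt_or_ge u.length 2 with hlen | hlen
    · have := List.length_pos_iff.2 hu
      exact Or.inl (by omega)
    · exact Or.inr ⟨hlen, fun uL uR hsh => h uR hsh.right_suffix hsh.right_ne hsh.2.2.1⟩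
  · rintro (hlen | ⟨hlen, hR⟩) s hs hsu hs0
    · have := List.length_pos_iff.2 hs0
      exact absurd (hs.eq_of_length_le (by omega)) hsu
    · obtain ⟨uL, uR, hsh⟩ := exists_isShirshov hlen
      exact PLexLe.trans (hsh.2.2.2 s hs hsu hs0) (hR uL uR hsh)

end Lyndon

/-- For Lyndon words `u, v`, the Shirshov factorization of `uv`
is `(u, v)` iff either `u` is a single letter, or `u` has length `≥ 2` and
`u_R ≤_lex v` for the Shirshov factorization `(u_L, u_R)` of `u`. -/
theorem isShirshov_append_iff (u v : List X) (hu : IsLyndon u) (hv : IsLyndon v) :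
    IsShirshov (u ++ v) u v ↔
      u.length = 1 ∨
      (2 ≤ u.length ∧ ∀ uL uR : List X, IsShirshov u uL uR → PLexLe uR v) :=
  (isShirshov_append_iff_forall_suffix hu.1 hv).trans (forall_suffix_pLexLe_iff hu.1)
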